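/- For ρ > 0 and a C¹ function L : ℝ^n → ℝ with L-Lipschitz gradient (constant β), the SAM objective satisfies |L_SAM(w) − L(w) − ρ‖∇L(w)‖| ≤ (β/2)ρ², where L_SAM(w) = max_{‖ε‖≤ρ} L(w+ε). -/

import Mathlib

open intervalIntegral in
lemma taylor_quad {n : ℕ} (L : EuclideanSpace ℝ (Fin n) → ℝ) (hL : ContDiff ℝ 1 L)
    (β : ℝ) (hβ : 0 ≤ β)
    (hlip : ∀ u v : EuclideanSpace ℝ (Fin n),
      ‖gradient L u - gradient L v‖ ≤ β * ‖u - v‖)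
    (w v : EuclideanSpace ℝ (Fin n)) :
    |L (w + v) - L w - inner ℝ (gradient L w) v| ≤ β / 2 * ‖v‖ ^ 2 := by
  have hdiff : Differentiable ℝ L := hL.differentiable one_ne_zero
  set φ : ℝ → ℝ := fun t => (inner ℝ (gradient L (w + t • v)) v : ℝ) with hφ
  have hderiv : ∀ t : ℝ, HasDerivAt (fun t : ℝ => L (w + t • v)) (φ t) t := by
    intro t
    have h1 : HasDerivAt (fun t : ℝ => w + t • v) v t := by
      simpa using ((hasDerivAt_id t).smul_const v).const_add w
    have h2 := ((hdiff (w + t • v)).hasGradientAt.hasFDerivAt).comp_hasDerivAt t h1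
    exact h2
  have hgradcont : Continuous fun x => gradient L x := by
    have : Continuous fun x => fderiv ℝ L x := hL.continuous_fderiv one_ne_zero
    exact (InnerProductSpace.toDual ℝ _).symm.continuous.comp this
  have hφcont : Continuous φ := by
    apply Continuous.inner
    · exact hgradcont.comp (by continuity)
    · exact continuous_const
  have hint : IntervalIntegrable φ MeasureTheory.volume 0 1 :=
    hφcont.intervalIntegrable 0 1
  have hFTC : ∫ t in (0:ℝ)..1, φ t = L (w + v) - L w := by
    have := integral_eq_sub_of_hasDerivAt (fun t _ => hderiv t) hint
    simpa using this
  have hconst : ∫ t in (0:ℝ)..1, (inner ℝ (gradient L w) v : ℝ)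
      = (inner ℝ (gradient L w) v : ℝ) := by simp
  have hsplit : L (w + v) - L w - inner ℝ (gradient L w) v
      = ∫ t in (0:ℝ)..1, (φ t - inner ℝ (gradient L w) v) := by
    rw [integral_sub hint (intervalIntegrable_const), hFTC, hconst]
  rw [hsplit]
  have hb : IntervalIntegrable (fun t : ℝ => β * ‖v‖ ^ 2 * t)
      MeasureTheory.volume 0 1 := (continuous_const.mul continuous_id).intervalIntegrable 0 1
  have hbound : ∀ᵐ t ∂MeasureTheory.volume.restrict (Set.uIoc (0:ℝ) 1),
      ‖φ t - inner ℝ (gradient L w) v‖ ≤ β * ‖v‖ ^ 2 * t := by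
    refine (MeasureTheory.ae_restrict_iff' measurableSet_uIoc).2 ?_
    refine Filter.Eventually.of_forall fun t ht => ?_
    rw [Set.uIoc_of_le zero_le_one] at ht
    have ht0 : 0 < t := ht.1
    have ht1 : t ≤ 1 := ht.2
    have h1 : φ t - inner ℝ (gradient L w) v
        = (inner ℝ (gradient L (w + t • v) - gradient L w) v : ℝ) := by
      simp [hφ, inner_sub_left]
    rw [h1]
    calc ‖(inner ℝ (gradient L (w + t • v) - gradient L w) v : ℝ)‖
        ≤ ‖gradient L (w + t • v) - gradient L w‖ * ‖v‖ := norm_inner_le_norm _ _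
      _ ≤ (β * ‖(w + t • v) - w‖) * ‖v‖ := by
          gcongr; exact hlip _ _
      _ = β * ‖v‖ ^ 2 * t := by
          have : (w + t • v) - w = t • v := by abel
          rw [this, norm_smul]
          simp [abs_of_pos ht0]
          ring
  have hmain := intervalIntegral.norm_integral_le_of_norm_le (f := fun t => φ t - inner ℝ (gradient L w) v) zero_le_one
    ((MeasureTheory.ae_restrict_iff' measurableSet_Ioc).1 (by have h := hbound; rw [Set.uIoc_of_le zero_le_one] at h; exact h)) hb
  have hval : ∫ t in (0:ℝ)..1, β * ‖v‖ ^ 2 * t = β / 2 * ‖v‖ ^ 2 := by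
    rw [intervalIntegral.integral_const_mul, integral_id]
    ring
  rw [hval] at hmain
  calc |∫ t in (0:ℝ)..1, (φ t - inner ℝ (gradient L w) v)|
      ≤ |β / 2 * ‖v‖ ^ 2| := by rw [← Real.norm_eq_abs]; exact hmain.trans (le_abs_self _)
    _ = β / 2 * ‖v‖ ^ 2 := abs_of_nonneg (by positivity)

theorem stmt17 {n : ℕ} (L : EuclideanSpace ℝ (Fin n) → ℝ) (hL : ContDiff ℝ 1 L)
    (β : ℝ) (hβ : 0 ≤ β)
    (hlip : ∀ u v : EuclideanSpace ℝ (Fin n),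
      ‖gradient L u - gradient L v‖ ≤ β * ‖u - v‖)
    (ρ : ℝ) (hρ : 0 < ρ) (w : EuclideanSpace ℝ (Fin n)) :
    |sSup (L '' Metric.closedBall w ρ) - L w - ρ * ‖gradient L w‖|
      ≤ β / 2 * ρ ^ 2 := by
  set g := gradient L w with hg
  set S := L '' Metric.closedBall w ρ with hS
  have htaylor : ∀ x ∈ Metric.closedBall w ρ,
      |L x - L w - inner ℝ g (x - w)| ≤ β / 2 * ρ ^ 2 := by
    intro x hx
    have h := taylor_quad L hL β hβ hlip w (x - w)
    rw [add_sub_cancel] at h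
    refine h.trans ?_
    have hxw : ‖x - w‖ ≤ ρ := by
      rwa [Metric.mem_closedBall, dist_eq_norm] at hx
    gcongr
  -- upper bound for all elements of S
  have hub : ∀ y ∈ S, y ≤ L w + ρ * ‖g‖ + β / 2 * ρ ^ 2 := by
    rintro y ⟨x, hx, rfl⟩
    have h := (abs_le.mp (htaylor x hx)).2
    have hinner : (inner ℝ g (x - w) : ℝ) ≤ ρ * ‖g‖ := by
      calc (inner ℝ g (x - w) : ℝ) ≤ ‖g‖ * ‖x - w‖ := real_inner_le_norm _ _
        _ ≤ ‖g‖ * ρ := by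
            gcongr
            rwa [Metric.mem_closedBall, dist_eq_norm] at hx
        _ = ρ * ‖g‖ := mul_comm _ _
    linarith
  have hne : S.Nonempty := ⟨L w, w, Metric.mem_closedBall_self hρ.le, rfl⟩
  have hbdd : BddAbove S := ⟨L w + ρ * ‖g‖ + β / 2 * ρ ^ 2, fun y hy => hub y hy⟩
  have hupper : sSup S ≤ L w + ρ * ‖g‖ + β / 2 * ρ ^ 2 := csSup_le hne hub
  -- lower bound: pick the maximizing direction
  have hlower : L w + ρ * ‖g‖ - β / 2 * ρ ^ 2 ≤ sSup S := by
    by_cases hg0 : g = 0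
    · have : L w ∈ S := ⟨w, Metric.mem_closedBall_self hρ.le, rfl⟩
      have h1 : L w ≤ sSup S := le_csSup hbdd this
      have h2 : 0 ≤ β / 2 * ρ ^ 2 := by positivity
      rw [hg0]
      simp only [norm_zero, mul_zero, add_zero]
      linarith
    · set x := w + (ρ / ‖g‖) • g with hx
      have hgn : 0 < ‖g‖ := norm_pos_iff.mpr hg0
      have hxball : x ∈ Metric.closedBall w ρ := by
        rw [Metric.mem_closedBall, dist_eq_norm, hx]
        have : w + (ρ / ‖g‖) • g - w = (ρ / ‖g‖) • g := by abel
        rw [this, norm_smul]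
        rw [Real.norm_eq_abs, abs_of_pos (by positivity)]
        field_simp
        exact le_rfl
      have hmem : L x ∈ S := ⟨x, hxball, rfl⟩
      have h1 : L x ≤ sSup S := le_csSup hbdd hmem
      have h2 := (abs_le.mp (htaylor x hxball)).1
      have hinner : (inner ℝ g (x - w) : ℝ) = ρ * ‖g‖ := by
        have hxw : x - w = (ρ / ‖g‖) • g := by rw [hx]; abel
        rw [hxw, real_inner_smul_right, real_inner_self_eq_norm_sq]
        field_simp
      rw [hinner] at h2
      linarith
  rw [abs_le]
  constructor <;> linarith
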